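/- Let v, u ∈ D2 be two orthogonal unit vectors. Then the following are equivalent: (i) u ∈ V_v(0); (ii) L(u,v) = 0; (iii) L(u,u) = L(v,v); (iv) v ∈ V_u(0). Moreover, any of these statements implies that P_v = P_u on the orthogonal complement of span{u,v} in D2. -/

import Mathlib

/-!
Evaluating the parallelism identity `R(e₁, a) K(b, c) = K(R(e₁, a) b, c) + K(b, R(e₁, a) c)` for
`a, b, c ∈ D₂`, and computing `R(e₁, a)` on each summand of `span{e₁} ⊕ D₂ ⊕ D₃`, gives after
division by `η ≠ 0` the cyclic identity
`K(a, L(b,c)) + K(b, L(a,c)) + K(c, L(a,b)) = (λ₁η/2)(⟨b,c⟩a + ⟨a,b⟩c + ⟨a,c⟩b)`.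
Since `L` takes values in `D₃ ⟂ e₁`, `⟨K(x, L(y,z)), w⟩ = ⟨L(y,z), L(x,w)⟩`, and pairing the
cyclic identity with unit vectors yields `‖L(u,u)‖² = ‖L(v,v)‖² = λ₁η/2` and
`⟨L(u,u), L(v,v)⟩ + 2‖L(u,v)‖² = λ₁η/2`, i.e. `‖L(u,u) - L(v,v)‖² = 4‖L(u,v)‖²`.
For `u ⟂ v` one has `P_v u = K(v, K(v,u))` and `⟨P_v u, u⟩ = ‖K(u,v)‖²`, so `u ∈ V_v(0)` iff
`L(u,v) = 0`. Finally, for a unit `x ⟂ w` the cyclic identity reads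
`2 P_x w = (λ₁η/2) w - K(w, L(x,x))`, which depends on `x` only through `L(x,x)`.
-/

open scoped RealInnerProductSpace
open Module Submodule

noncomputable section

variable {V : Type*} [NormedAddCommGroup V] [InnerProductSpace ℝ V]

/-- The curvature-type operator built from `ε` and the difference tensor `K`:
`R(X,Y)Z = ε(⟨Y,Z⟩X − ⟨X,Z⟩Y) − K(X,K(Y,Z)) + K(Y,K(X,Z))`. -/
def Rc (ε : ℝ) (K : V →ₗ[ℝ] V →ₗ[ℝ] V) (X Y Z : V) : V :=
  ε • (⟪Y, Z⟫ • X - ⟪X, Z⟫ • Y) - K X (K Y Z) + K Y (K X Z)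

/-- The bilinear map `L(v₁,v₂) = K(v₁,v₂) − (λ₁/2)⟨v₁,v₂⟩ e₁`. -/
def Lop (lam1 : ℝ) (e1 : V) (K : V →ₗ[ℝ] V →ₗ[ℝ] V) (v1 v2 : V) : V :=
  K v1 v2 - (lam1 / 2 * ⟪v1, v2⟫) • e1

/-- The distribution `D₂ = {v : v ⟂ e₁, K(e₁,v) = (λ₁/2)v}`. -/
def D2s (lam1 : ℝ) (e1 : V) (K : V →ₗ[ℝ] V →ₗ[ℝ] V) : Submodule ℝ V :=
  (ℝ ∙ e1)ᗮ ⊓ Module.End.eigenspace (K e1) (lam1 / 2)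

/-- The distribution `D₃ = {w : w ⟂ e₁, K(e₁,w) = μw}`. -/
def D3s (mu : ℝ) (e1 : V) (K : V →ₗ[ℝ] V →ₗ[ℝ] V) : Submodule ℝ V :=
  (ℝ ∙ e1)ᗮ ⊓ Module.End.eigenspace (K e1) mu

/-- The operator `P_v(ṽ) = K(v, L(v,ṽ))`, as a linear endomorphism of `V`. -/
def Pop (lam1 : ℝ) (e1 : V) (K : V →ₗ[ℝ] V →ₗ[ℝ] V) (v : V) : V →ₗ[ℝ] V :=
  (K v) ∘ₗ (K v - (lam1 / 2) •
    ((LinearMap.toSpanSingleton ℝ V e1) ∘ₗ (innerSL ℝ v).toLinearMap))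

/-- The eigenspace `V_v(c)` of `P_v` within the orthogonal complement of `v` in `D₂`. -/
def Vvs (lam1 c : ℝ) (e1 : V) (K : V →ₗ[ℝ] V →ₗ[ℝ] V) (v : V) : Submodule ℝ V :=
  D2s lam1 e1 K ⊓ (ℝ ∙ v)ᗮ ⊓ Module.End.eigenspace (Pop lam1 e1 K v) c

section

variable {K : V →ₗ[ℝ] V →ₗ[ℝ] V} {e1 : V} {lam1 μ η ε : ℝ}

lemma Rc_add_right (X Y Z W : V) : Rc ε K X Y (Z + W) = Rc ε K X Y Z + Rc ε K X Y W := by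
  simp only [Rc, inner_add_right, map_add]
  module

lemma Rc_smul_right (c : ℝ) (X Y Z : V) : Rc ε K X Y (c • Z) = c • Rc ε K X Y Z := by
  simp only [Rc, real_inner_smul_right, map_smul]
  module

lemma K_eq_Lop_add (a b : V) : K a b = Lop lam1 e1 K a b + (lam1 / 2 * ⟪a, b⟫) • e1 := by
  rw [Lop, sub_add_cancel]

lemma Lop_comm (hKsymm : ∀ X Y : V, K X Y = K Y X) (a b : V) :
    Lop lam1 e1 K a b = Lop lam1 e1 K b a := by
  rw [Lop, Lop, hKsymm, real_inner_comm]

lemma Lop_of_inner_eq_zero {a b : V} (h : ⟪a, b⟫ = 0) : Lop lam1 e1 K a b = K a b := by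
  rw [Lop, h, mul_zero, zero_smul, sub_zero]

lemma Pop_apply (x y : V) : Pop lam1 e1 K x y = K x (Lop lam1 e1 K x y) := by
  simp [Pop, Lop, smul_smul]

lemma mem_D3s_iff {x : V} : x ∈ D3s μ e1 K ↔ ⟪e1, x⟫ = 0 ∧ K e1 x = μ • x := by
  rw [D3s, mem_inf, mem_orthogonal_singleton_iff_inner_right, Module.End.mem_eigenspace_iff]

lemma mem_D2s_iff {x : V} : x ∈ D2s lam1 e1 K ↔ ⟪e1, x⟫ = 0 ∧ K e1 x = (lam1 / 2) • x :=
  mem_D3s_iff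

lemma isSymmetric_K (hKcub : ∀ X Y Z : V, ⟪K X Y, Z⟫ = ⟪K X Z, Y⟫) (x : V) :
    (K x).IsSymmetric := fun y z => by
  rw [hKcub, real_inner_comm]

lemma inner_eq_zero_of_mem_D2s_of_mem_D3s (hKcub : ∀ X Y Z : V, ⟪K X Y, Z⟫ = ⟪K X Z, Y⟫)
    (hμ : μ ≠ lam1 / 2) {x y : V} (hx : x ∈ D2s lam1 e1 K) (hy : y ∈ D3s μ e1 K) :
    ⟪x, y⟫ = 0 :=
  ((isSymmetric_K hKcub e1).orthogonalFamily_eigenspaces.isOrtho hμ.symm).inner_eq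
    (mem_inf.1 hx).2 (mem_inf.1 hy).2

lemma K_self_eq_smul (hKcub : ∀ X Y Z : V, ⟪K X Y, Z⟫ = ⟪K X Z, Y⟫) (he1 : ⟪e1, e1⟫ = 1)
    (hlam1 : lam1 = ⟪K e1 e1, e1⟫) (hsplit : (ℝ ∙ e1) ⊔ D2s lam1 e1 K ⊔ D3s μ e1 K = ⊤) :
    K e1 e1 = lam1 • e1 := by
  have hperp : ∀ c, ∀ x ∈ D3s c e1 K, ⟪x, K e1 e1 - lam1 • e1⟫ = 0 := by
    intro c x hx
    obtain ⟨hex, hKx⟩ := mem_D3s_iff.1 hx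
    rw [inner_sub_right, real_inner_comm, hKcub, hKx, real_inner_smul_right,
      real_inner_smul_left, real_inner_comm, hex]
    ring
  have hmem : K e1 e1 - lam1 • e1 ∈ ((ℝ ∙ e1) ⊔ D2s lam1 e1 K ⊔ D3s μ e1 K)ᗮ := by
    rw [← inf_orthogonal, ← inf_orthogonal]
    refine mem_inf.2 ⟨mem_inf.2 ⟨?_, (mem_orthogonal _ _).2 (hperp _)⟩,
      (mem_orthogonal _ _).2 (hperp _)⟩
    rw [mem_orthogonal_singleton_iff_inner_right, inner_sub_right, real_inner_smul_right, he1,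
      real_inner_comm, ← hlam1]
    ring
  rwa [hsplit, top_orthogonal_eq_bot, mem_bot, sub_eq_zero] at hmem


lemma Rc_e1_e1_right (hKsymm : ∀ X Y : V, K X Y = K Y X) (hKe1 : K e1 e1 = lam1 • e1)
    (he1 : ⟪e1, e1⟫ = 1) (hε : ε = lam1 ^ 2 / 4 - η ^ 2) {a : V} (ha : a ∈ D2s lam1 e1 K) :
    Rc ε K e1 a e1 = (η ^ 2) • a := by
  obtain ⟨hea, hKa⟩ := mem_D2s_iff.1 ha
  rw [Rc, hKe1, map_smul, hKsymm a e1, hKa, map_smul, hKa, real_inner_comm, hea, he1, hε]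
  module

lemma Rc_e1_of_mem_D2s_right (hKe1 : K e1 e1 = lam1 • e1) (hε : ε = lam1 ^ 2 / 4 - η ^ 2)
    (hμ : μ = lam1 / 2 - η)
    (hLD3 : ∀ v1 ∈ D2s lam1 e1 K, ∀ v2 ∈ D2s lam1 e1 K, Lop lam1 e1 K v1 v2 ∈ D3s μ e1 K)
    {a b : V} (ha : a ∈ D2s lam1 e1 K) (hb : b ∈ D2s lam1 e1 K) :
    Rc ε K e1 a b = η • Lop lam1 e1 K a b - (η ^ 2 * ⟪a, b⟫) • e1 := by
  obtain ⟨heb, hKb⟩ := mem_D2s_iff.1 hb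
  rw [Rc, heb, K_eq_Lop_add (lam1 := lam1) (e1 := e1) a b, map_add, map_smul,
    (mem_D3s_iff.1 (hLD3 a ha b hb)).2, hKe1, hKb, map_smul,
    K_eq_Lop_add (lam1 := lam1) (e1 := e1) a b, hε, hμ]
  module

lemma Rc_e1_of_mem_D3s_right (hKcub : ∀ X Y Z : V, ⟪K X Y, Z⟫ = ⟪K X Z, Y⟫)
    (hμ : μ = lam1 / 2 - η) (hη : η ≠ 0)
    (hKD2 : ∀ v ∈ D2s lam1 e1 K, ∀ w ∈ D3s μ e1 K, K v w ∈ D2s lam1 e1 K)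
    {a y : V} (ha : a ∈ D2s lam1 e1 K) (hy : y ∈ D3s μ e1 K) :
    Rc ε K e1 a y = (-η) • K a y := by
  have hμ' : μ ≠ lam1 / 2 := by rw [hμ]; simpa using hη
  obtain ⟨hey, hKy⟩ := mem_D3s_iff.1 hy
  rw [Rc, inner_eq_zero_of_mem_D2s_of_mem_D3s hKcub hμ' ha hy, hey, hKy, map_smul,
    (mem_D2s_iff.1 (hKD2 a ha y hy)).2, hμ]
  module

def LopCyclicIdentity (lam1 κ : ℝ) (e1 : V) (K : V →ₗ[ℝ] V →ₗ[ℝ] V) (W : Submodule ℝ V) :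
    Prop :=
  ∀ a ∈ W, ∀ b ∈ W, ∀ c ∈ W,
    K a (Lop lam1 e1 K b c) + K b (Lop lam1 e1 K a c) + K c (Lop lam1 e1 K a b) =
      κ • (⟪b, c⟫ • a + ⟪a, b⟫ • c + ⟪a, c⟫ • b)

theorem lopCyclicIdentity_D2s (hKsymm : ∀ X Y : V, K X Y = K Y X)
    (hKcub : ∀ X Y Z : V, ⟪K X Y, Z⟫ = ⟪K X Z, Y⟫)
    (hpar : ∀ X Y Z U : V, Rc ε K X Y (K Z U) = K (Rc ε K X Y Z) U + K Z (Rc ε K X Y U))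
    (hKe1 : K e1 e1 = lam1 • e1) (he1 : ⟪e1, e1⟫ = 1) (hε : ε = lam1 ^ 2 / 4 - η ^ 2)
    (hμ : μ = lam1 / 2 - η) (hη : η ≠ 0)
    (hLD3 : ∀ v1 ∈ D2s lam1 e1 K, ∀ v2 ∈ D2s lam1 e1 K, Lop lam1 e1 K v1 v2 ∈ D3s μ e1 K)
    (hKD2 : ∀ v ∈ D2s lam1 e1 K, ∀ w ∈ D3s μ e1 K, K v w ∈ D2s lam1 e1 K) :
    LopCyclicIdentity lam1 (lam1 * η / 2) e1 K (D2s lam1 e1 K) := by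
  intro a ha b hb c hc
  have h := hpar e1 a b c
  rw [K_eq_Lop_add (lam1 := lam1) (e1 := e1) b c, Rc_add_right, Rc_smul_right,
    Rc_e1_of_mem_D3s_right hKcub hμ hη hKD2 ha (hLD3 b hb c hc),
    Rc_e1_e1_right hKsymm hKe1 he1 hε ha, Rc_e1_of_mem_D2s_right hKe1 hε hμ hLD3 ha hb,
    Rc_e1_of_mem_D2s_right hKe1 hε hμ hLD3 ha hc] at h
  simp only [map_sub, map_smul, LinearMap.sub_apply, LinearMap.smul_apply] at h
  rw [hKsymm (Lop lam1 e1 K a b) c, hKsymm b e1, (mem_D2s_iff.1 hb).2,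
    (mem_D2s_iff.1 hc).2] at h
  apply smul_right_injective V hη
  linear_combination (norm := module) (-1 : ℝ) • h


lemma inner_K_eq_inner_Lop (hKcub : ∀ X Y Z : V, ⟪K X Y, Z⟫ = ⟪K X Z, Y⟫) {ℓ : V}
    (hℓ : ⟪e1, ℓ⟫ = 0) (x w : V) : ⟪K x ℓ, w⟫ = ⟪ℓ, Lop lam1 e1 K x w⟫ := by
  rw [hKcub, K_eq_Lop_add (lam1 := lam1) (e1 := e1) x w, inner_add_left, real_inner_smul_left, hℓ,
    mul_zero, add_zero, real_inner_comm]

lemma mem_Vvs_zero_iff (hKsymm : ∀ X Y : V, K X Y = K Y X)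
    (hKcub : ∀ X Y Z : V, ⟪K X Y, Z⟫ = ⟪K X Z, Y⟫) {x y : V} (hy : y ∈ D2s lam1 e1 K)
    (hxy : ⟪x, y⟫ = 0) : y ∈ Vvs lam1 0 e1 K x ↔ Lop lam1 e1 K y x = 0 := by
  rw [Lop_comm hKsymm, Lop_of_inner_eq_zero hxy, Vvs, mem_inf, mem_inf,
    mem_orthogonal_singleton_iff_inner_right, Module.End.mem_eigenspace_iff, zero_smul, Pop_apply,
    Lop_of_inner_eq_zero hxy]
  simp only [hy, hxy, true_and]
  constructor
  · intro h
    have hself : ⟪K x (K x y), y⟫ = 0 := by rw [h, inner_zero_left]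
    rwa [hKcub, inner_self_eq_zero] at hself
  · intro h
    rw [h, map_zero]

variable {κ : ℝ} {W : Submodule ℝ V}

lemma two_smul_K_Lop (hcyc : LopCyclicIdentity lam1 κ e1 K W) {x w : V} (hx : x ∈ W)
    (hw : w ∈ W) (hx1 : ⟪x, x⟫ = 1) (hxw : ⟪x, w⟫ = 0) :
    (2 : ℝ) • K x (Lop lam1 e1 K x w) = κ • w - K w (Lop lam1 e1 K x x) := by
  have h := hcyc x hx x hx w hw
  rw [hx1, hxw] at h
  linear_combination (norm := module) h

lemma inner_Lop_self_self (hKcub : ∀ X Y Z : V, ⟪K X Y, Z⟫ = ⟪K X Z, Y⟫)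
    (hcyc : LopCyclicIdentity lam1 κ e1 K W)
    (hLe1 : ∀ a ∈ W, ∀ b ∈ W, ⟪e1, Lop lam1 e1 K a b⟫ = 0) {x : V} (hx : x ∈ W)
    (hx1 : ⟪x, x⟫ = 1) : ⟪Lop lam1 e1 K x x, Lop lam1 e1 K x x⟫ = κ := by
  have h := hcyc x hx x hx x hx
  rw [hx1] at h
  have hK : K x (Lop lam1 e1 K x x) = κ • x := by
    linear_combination (norm := module) (1 / 3 : ℝ) • h
  rw [← inner_K_eq_inner_Lop hKcub (hLe1 x hx x hx), hK, real_inner_smul_left, hx1, mul_one]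

lemma inner_Lop_self_add_two_mul (hKcub : ∀ X Y Z : V, ⟪K X Y, Z⟫ = ⟪K X Z, Y⟫)
    (hcyc : LopCyclicIdentity lam1 κ e1 K W)
    (hLe1 : ∀ a ∈ W, ∀ b ∈ W, ⟪e1, Lop lam1 e1 K a b⟫ = 0) {x y : V} (hx : x ∈ W) (hy : y ∈ W)
    (hx1 : ⟪x, x⟫ = 1) (hy1 : ⟪y, y⟫ = 1) (hxy : ⟪x, y⟫ = 0) :
    ⟪Lop lam1 e1 K x x, Lop lam1 e1 K y y⟫ + 2 * ⟪Lop lam1 e1 K x y, Lop lam1 e1 K x y⟫ = κ := by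
  have h := congrArg (⟪·, y⟫) (two_smul_K_Lop hcyc hx hy hx1 hxy)
  simp only [inner_sub_left, real_inner_smul_left, hy1] at h
  rw [inner_K_eq_inner_Lop hKcub (hLe1 x hx y hy), inner_K_eq_inner_Lop hKcub (hLe1 x hx x hx)] at h
  linarith

lemma Lop_eq_zero_iff_Lop_self_eq (hKcub : ∀ X Y Z : V, ⟪K X Y, Z⟫ = ⟪K X Z, Y⟫)
    (hcyc : LopCyclicIdentity lam1 κ e1 K W)
    (hLe1 : ∀ a ∈ W, ∀ b ∈ W, ⟪e1, Lop lam1 e1 K a b⟫ = 0) {u v : V} (hu : u ∈ W) (hv : v ∈ W)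
    (hu1 : ⟪u, u⟫ = 1) (hv1 : ⟪v, v⟫ = 1) (huv : ⟪u, v⟫ = 0) :
    Lop lam1 e1 K u v = 0 ↔ Lop lam1 e1 K u u = Lop lam1 e1 K v v := by
  have hmix := inner_Lop_self_add_two_mul hKcub hcyc hLe1 hu hv hu1 hv1 huv
  have hdiff : ⟪Lop lam1 e1 K u u - Lop lam1 e1 K v v, Lop lam1 e1 K u u - Lop lam1 e1 K v v⟫ =
      4 * ⟪Lop lam1 e1 K u v, Lop lam1 e1 K u v⟫ := by
    rw [inner_sub_left, inner_sub_right, inner_sub_right,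
      inner_Lop_self_self hKcub hcyc hLe1 hu hu1,
      inner_Lop_self_self hKcub hcyc hLe1 hv hv1, real_inner_comm (Lop lam1 e1 K u u)]
    linarith
  rw [← sub_eq_zero (a := Lop lam1 e1 K u u), ← inner_self_eq_zero (𝕜 := ℝ),
    ← inner_self_eq_zero (𝕜 := ℝ) (x := Lop lam1 e1 K u u - _), hdiff]
  constructor <;> intro h <;> linarith

lemma K_Lop_eq_of_Lop_self_eq (hcyc : LopCyclicIdentity lam1 κ e1 K W) {u v w : V}
    (hu : u ∈ W) (hv : v ∈ W) (hw : w ∈ W) (hu1 : ⟪u, u⟫ = 1) (hv1 : ⟪v, v⟫ = 1)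
    (huw : ⟪u, w⟫ = 0) (hvw : ⟪v, w⟫ = 0) (h : Lop lam1 e1 K u u = Lop lam1 e1 K v v) :
    K v (Lop lam1 e1 K v w) = K u (Lop lam1 e1 K u w) := by
  have hu' := two_smul_K_Lop hcyc hu hw hu1 huw
  rw [h, ← two_smul_K_Lop hcyc hv hw hv1 hvw] at hu'
  exact smul_right_injective V two_ne_zero hu'.symm

end

theorem stmt_11_general {V : Type*} [NormedAddCommGroup V] [InnerProductSpace ℝ V]
    (ε : ℝ)
    (K : V →ₗ[ℝ] V →ₗ[ℝ] V)
    (hKsymm : ∀ X Y : V, K X Y = K Y X)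
    (hKcub : ∀ X Y Z : V, ⟪K X Y, Z⟫ = ⟪K X Z, Y⟫)
    (hpar : ∀ X Y Z U : V,
      Rc ε K X Y (K Z U) = K (Rc ε K X Y Z) U + K Z (Rc ε K X Y U))
    (e1 : V) (he1 : ‖e1‖ = 1)
    (lam1 η μ : ℝ)
    (hlam1 : lam1 = ⟪K e1 e1, e1⟫)
    (hdisc : 0 < lam1 ^ 2 - 4 * ε)
    (hη : η = Real.sqrt (lam1 ^ 2 - 4 * ε) / 2)
    (hμ : μ = (lam1 - Real.sqrt (lam1 ^ 2 - 4 * ε)) / 2)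
    (hsplit : (ℝ ∙ e1) ⊔ D2s lam1 e1 K ⊔ D3s μ e1 K = ⊤)
    (hLD3 : ∀ v1 ∈ D2s lam1 e1 K, ∀ v2 ∈ D2s lam1 e1 K,
      Lop lam1 e1 K v1 v2 ∈ D3s μ e1 K)
    (hKD2 : ∀ v ∈ D2s lam1 e1 K, ∀ w ∈ D3s μ e1 K, K v w ∈ D2s lam1 e1 K)
    (v u : V) (hv : v ∈ D2s lam1 e1 K) (hu : u ∈ D2s lam1 e1 K)
    (hvu : ‖v‖ = 1) (huu : ‖u‖ = 1) (horth : ⟪v, u⟫ = 0) :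
    (u ∈ Vvs lam1 0 e1 K v ↔ Lop lam1 e1 K u v = 0) ∧
    (Lop lam1 e1 K u v = 0 ↔ Lop lam1 e1 K u u = Lop lam1 e1 K v v) ∧
    (Lop lam1 e1 K u u = Lop lam1 e1 K v v ↔ v ∈ Vvs lam1 0 e1 K u) ∧
    (u ∈ Vvs lam1 0 e1 K v →
      ∀ w ∈ D2s lam1 e1 K, ⟪u, w⟫ = 0 → ⟪v, w⟫ = 0 →
        K v (Lop lam1 e1 K v w) = K u (Lop lam1 e1 K u w)) := by
  have unit_inner {x : V} (hx : ‖x‖ = 1) : ⟪x, x⟫ = 1 := by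
    rw [real_inner_self_eq_norm_sq, hx, one_pow]
  have hη0 : η ≠ 0 := hη ▸ (div_pos (Real.sqrt_pos.2 hdisc) two_pos).ne'
  have hεη : ε = lam1 ^ 2 / 4 - η ^ 2 := by rw [hη, div_pow, Real.sq_sqrt hdisc.le]; ring
  have hμη : μ = lam1 / 2 - η := by rw [hμ, hη]; ring
  have hKe1 := K_self_eq_smul hKcub (unit_inner he1) hlam1 hsplit
  have hcyc := lopCyclicIdentity_D2s hKsymm hKcub hpar hKe1 (unit_inner he1) hεη hμη hη0 hLD3 hKD2
  have hLe1 : ∀ a ∈ D2s lam1 e1 K, ∀ b ∈ D2s lam1 e1 K, ⟪e1, Lop lam1 e1 K a b⟫ = 0 :=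
    fun a ha b hb => (mem_D3s_iff.1 (hLD3 a ha b hb)).1
  have hLuv := Lop_eq_zero_iff_Lop_self_eq hKcub hcyc hLe1 hu hv (unit_inner huu) (unit_inner hvu)
    (real_inner_comm u v ▸ horth)
  have hVv := mem_Vvs_zero_iff hKsymm hKcub hu horth
  refine ⟨hVv, hLuv, ?_, fun h w hw huw hvw => K_Lop_eq_of_Lop_self_eq hcyc hu hv hw
    (unit_inner huu) (unit_inner hvu) huw hvw (hLuv.1 (hVv.1 h))⟩
  rw [mem_Vvs_zero_iff hKsymm hKcub hv (real_inner_comm u v ▸ horth), Lop_comm hKsymm v u]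
  exact hLuv.symm

/-- Lemma 4.9: for orthogonal unit vectors `v, u ∈ D₂`, the statements
`u ∈ V_v(0)`, `L(u,v) = 0`, `L(u,u) = L(v,v)`, `v ∈ V_u(0)` are equivalent, and any
of them implies `P_v = P_u` on the orthogonal complement of `span{u,v}` in `D₂`. -/
theorem stmt_11 {V : Type*} [NormedAddCommGroup V] [InnerProductSpace ℝ V]
    (n m : ℕ) (hn : finrank ℝ V = n) (hn2 : 2 ≤ n)
    (ε : ℝ) (hε : ε = 1 ∨ ε = -1)
    (K : V →ₗ[ℝ] V →ₗ[ℝ] V)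
    (hKsymm : ∀ X Y : V, K X Y = K Y X)
    (hKcub : ∀ X Y Z : V, ⟪K X Y, Z⟫ = ⟪K X Z, Y⟫)
    (hpar : ∀ X Y Z U : V,
      Rc ε K X Y (K Z U) = K (Rc ε K X Y Z) U + K Z (Rc ε K X Y U))
    (e1 : V) (he1 : ‖e1‖ = 1)
    (lam1 η μ τ : ℝ)
    (hlam1 : lam1 = ⟪K e1 e1, e1⟫) (hlam1pos : 0 < lam1)
    (hmax : ∀ u : V, ‖u‖ = 1 → ⟪K u u, u⟫ ≤ lam1)
    (hdisc : 0 < lam1 ^ 2 - 4 * ε)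
    (hη : η = Real.sqrt (lam1 ^ 2 - 4 * ε) / 2)
    (hμ : μ = (lam1 - Real.sqrt (lam1 ^ 2 - 4 * ε)) / 2)
    (hτ : τ = η * (η + lam1 / 2) / 4)
    (hm2 : 2 ≤ m) (hmn : m ≤ n - 1)
    (hdimD2 : finrank ℝ (D2s lam1 e1 K) = m - 1)
    (hsplit : (ℝ ∙ e1) ⊔ D2s lam1 e1 K ⊔ D3s μ e1 K = ⊤)
    (hLD3 : ∀ v1 ∈ D2s lam1 e1 K, ∀ v2 ∈ D2s lam1 e1 K,
      Lop lam1 e1 K v1 v2 ∈ D3s μ e1 K)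
    (hKD2 : ∀ v ∈ D2s lam1 e1 K, ∀ w ∈ D3s μ e1 K, K v w ∈ D2s lam1 e1 K)
    (v u : V) (hv : v ∈ D2s lam1 e1 K) (hu : u ∈ D2s lam1 e1 K)
    (hvu : ‖v‖ = 1) (huu : ‖u‖ = 1) (horth : ⟪v, u⟫ = 0) :
    (u ∈ Vvs lam1 0 e1 K v ↔ Lop lam1 e1 K u v = 0) ∧
    (Lop lam1 e1 K u v = 0 ↔ Lop lam1 e1 K u u = Lop lam1 e1 K v v) ∧
    (Lop lam1 e1 K u u = Lop lam1 e1 K v v ↔ v ∈ Vvs lam1 0 e1 K u) ∧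
    (u ∈ Vvs lam1 0 e1 K v →
      ∀ w ∈ D2s lam1 e1 K, ⟪u, w⟫ = 0 → ⟪v, w⟫ = 0 →
        K v (Lop lam1 e1 K v w) = K u (Lop lam1 e1 K u w)) :=
  stmt_11_general ε K hKsymm hKcub hpar e1 he1 lam1 η μ hlam1 hdisc hη hμ hsplit hLD3 hKD2 v u hv hu
    hvu huu horth

end
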